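/- arXiv:1708.01545 — 3 statements merged into one kernel-verified Lean document; each statement's English description precedes it below -/
import Mathlib

section
/- Let H₁, H₂ be Hilbert spaces and R_j : X → H_j linear maps, j = 1, 2. If (R, H) is a square root of the non-negative operator A := R₁*R₁ + R₂*R₂, then ran R* = ran R₁* + ran R₂*. -/
open scoped ComplexOrder ComplexConjugate
open Complex

noncomputable section

/-- For a linear map `R : V → H` into a Hilbert space, `adjMap R : H → V'` is the
operator `R*`, sending `h` to the antilinear functional `v ↦ (h | R v)`
(in Mathlib's convention, `v ↦ ⟪R v, h⟫`). -/
def adjMap {V H : Type*} [AddCommGroup V] [Module ℂ V]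
    [NormedAddCommGroup H] [InnerProductSpace ℂ H] (R : V →ₗ[ℂ] H) :
    H →ₗ[ℂ] (V →ₗ⋆[ℂ] ℂ) where
  toFun h :=
    { toFun := fun v => @inner ℂ _ _ (R v) h
      map_add' := fun v w => by simp [inner_add_left]
      map_smul' := fun c v => by simp [inner_smul_left]; ring }
  map_add' h₁ h₂ := by ext v; simp [inner_add_right]
  map_smul' c h := by ext v; simp [inner_smul_right]

/-- For `B : Y → X'`, the operator `B~ := B'↾X : X → Y'`, `(B~ x) y = conj (⟨B y, x⟩)`. -/
def Btilde {X Y : Type*} [AddCommGroup X] [Module ℂ X] [AddCommGroup Y] [Module ℂ Y]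
    (B : Y →ₗ[ℂ] (X →ₗ⋆[ℂ] ℂ)) : X →ₗ[ℂ] (Y →ₗ⋆[ℂ] ℂ) where
  toFun x :=
    { toFun := fun y => conj (B y x)
      map_add' := fun y₁ y₂ => by simp
      map_smul' := fun c y => by simp }
  map_add' x₁ x₂ := by ext y; simp
  map_smul' c x := by ext y; simp

/-! If `R*R = S*S`, the graph `G = {(R x, S x)}` in the Hilbert sum `E ⊕ F` is orthogonal to
`{(R x, -S x)}`, hence so is its closure. Decompose `(e, 0) = g + q` with `g ∈ closure G` and
`q ⊥ G`; then `⟪R y, e⟫ = ⟪R y, g₁⟫ + ⟪R y, q₁⟫ = ⟪S y, g₂⟫ - ⟪S y, q₂⟫` for every `y`, so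
`R* e = S* (g₂ - q₂)`. For `S = (R₁, R₂)` one has `S*S = R₁*R₁ + R₂*R₂` and
`S* (h₁, h₂) = R₁* h₁ + R₂* h₂`, which gives the theorem. -/

open scoped InnerProductSpace

section

variable {X E F : Type*} [AddCommGroup X] [Module ℂ X]
  [NormedAddCommGroup E] [InnerProductSpace ℂ E] [NormedAddCommGroup F] [InnerProductSpace ℂ F]

@[simp]
theorem adjMap_apply (R : X →ₗ[ℂ] E) (e : E) (x : X) : adjMap R e x = ⟪R x, e⟫_ℂ := rfl

def prodL2 (R₁ : X →ₗ[ℂ] E) (R₂ : X →ₗ[ℂ] F) : X →ₗ[ℂ] WithLp 2 (E × F) :=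
  (WithLp.linearEquiv 2 ℂ (E × F)).symm.toLinearMap ∘ₗ R₁.prod R₂

theorem inner_prodL2_left (R₁ : X →ₗ[ℂ] E) (R₂ : X →ₗ[ℂ] F) (x : X) (w : WithLp 2 (E × F)) :
    ⟪prodL2 R₁ R₂ x, w⟫_ℂ = ⟪R₁ x, w.fst⟫_ℂ + ⟪R₂ x, w.snd⟫_ℂ :=
  rfl

theorem adjMap_prodL2 (R₁ : X →ₗ[ℂ] E) (R₂ : X →ₗ[ℂ] F) (w : WithLp 2 (E × F)) :
    adjMap (prodL2 R₁ R₂) w = adjMap R₁ w.fst + adjMap R₂ w.snd :=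
  LinearMap.ext fun x => inner_prodL2_left R₁ R₂ x w

theorem inner_fst_eq_inner_snd_of_mem_closure_range_prodL2 {R : X →ₗ[ℂ] E} {S : X →ₗ[ℂ] F}
    (hRS : ∀ x, adjMap R (R x) = adjMap S (S x)) {w : WithLp 2 (E × F)}
    (hw : w ∈ (LinearMap.range (prodL2 R S)).topologicalClosure) (y : X) :
    ⟪R y, w.fst⟫_ℂ = ⟪S y, w.snd⟫_ℂ := by
  have hortho : LinearMap.range (prodL2 R S) ≤ (LinearMap.range (prodL2 R (-S)))ᗮ := by
    rintro _ ⟨x, rfl⟩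
    rw [Submodule.mem_orthogonal]
    rintro _ ⟨y, rfl⟩
    have hxy := LinearMap.congr_fun (hRS x) y
    rw [adjMap_apply, adjMap_apply] at hxy
    show ⟪R y, R x⟫_ℂ + ⟪-S y, S x⟫_ℂ = 0
    rw [inner_neg_left, hxy, add_neg_cancel]
  have hw' := Submodule.topologicalClosure_minimal _ hortho (Submodule.isClosed_orthogonal _) hw
  have hyw := Submodule.inner_right_of_mem_orthogonal (LinearMap.mem_range_self _ y) hw'
  rwa [inner_prodL2_left, LinearMap.neg_apply, inner_neg_left, ← sub_eq_add_neg,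
    sub_eq_zero] at hyw

theorem range_adjMap_subset_of_adjMap_comp_eq [CompleteSpace E] [CompleteSpace F]
    {R : X →ₗ[ℂ] E} {S : X →ₗ[ℂ] F} (hRS : ∀ x, adjMap R (R x) = adjMap S (S x)) :
    Set.range (adjMap R) ⊆ Set.range (adjMap S) := by
  rintro _ ⟨e, rfl⟩
  set G := (LinearMap.range (prodL2 R S)).topologicalClosure
  have : CompleteSpace G := (Submodule.isClosed_topologicalClosure _).completeSpace_coe
  obtain ⟨g, hg, q, hq, hgq⟩ := G.exists_add_mem_mem_orthogonal (WithLp.toLp 2 (e, (0 : F)))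
  refine ⟨g.snd - q.snd, LinearMap.ext fun y => ?_⟩
  have hqy := Submodule.inner_right_of_mem_orthogonal
    ((LinearMap.range (prodL2 R S)).le_topologicalClosure (LinearMap.mem_range_self _ y)) hq
  rw [inner_prodL2_left, add_eq_zero_iff_eq_neg] at hqy
  have he : e = g.fst + q.fst := congrArg (fun w : WithLp 2 (E × F) => w.fst) hgq
  rw [adjMap_apply, adjMap_apply, he, inner_add_right, hqy,
    inner_fst_eq_inner_snd_of_mem_closure_range_prodL2 hRS hg y, inner_sub_right, sub_eq_add_neg]

theorem range_adjMap_eq_of_adjMap_comp_eq [CompleteSpace E] [CompleteSpace F]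
    {R : X →ₗ[ℂ] E} {S : X →ₗ[ℂ] F} (hRS : ∀ x, adjMap R (R x) = adjMap S (S x)) :
    Set.range (adjMap R) = Set.range (adjMap S) :=
  (range_adjMap_subset_of_adjMap_comp_eq hRS).antisymm
    (range_adjMap_subset_of_adjMap_comp_eq fun x => (hRS x).symm)

end

theorem schur_stmt5 {X H H₁ H₂ : Type} [AddCommGroup X] [Module ℂ X]
    [NormedAddCommGroup H] [InnerProductSpace ℂ H] [CompleteSpace H]
    [NormedAddCommGroup H₁] [InnerProductSpace ℂ H₁] [CompleteSpace H₁]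
    [NormedAddCommGroup H₂] [InnerProductSpace ℂ H₂] [CompleteSpace H₂]
    (R : X →ₗ[ℂ] H) (R₁ : X →ₗ[ℂ] H₁) (R₂ : X →ₗ[ℂ] H₂)
    (hR : ∀ x, adjMap R (R x) = adjMap R₁ (R₁ x) + adjMap R₂ (R₂ x)) :
    Set.range (adjMap R) =
      {f : X →ₗ⋆[ℂ] ℂ | ∃ h₁ h₂, f = adjMap R₁ h₁ + adjMap R₂ h₂} := by
  have hS : ∀ x, adjMap R (R x) = adjMap (prodL2 R₁ R₂) (prodL2 R₁ R₂ x) := fun x => by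
    rw [hR, adjMap_prodL2]
    rfl
  rw [range_adjMap_eq_of_adjMap_comp_eq hS]
  ext f
  constructor
  · rintro ⟨w, rfl⟩
    exact ⟨w.fst, w.snd, adjMap_prodL2 R₁ R₂ w⟩
  · rintro ⟨h₁, h₂, rfl⟩
    exact ⟨WithLp.toLp 2 (h₁, h₂), adjMap_prodL2 R₁ R₂ _⟩
end
end

section
/- Let A : X → X' be non-negative and B : Y → X' linear. The pair (A, B) is a positive pair (i.e., ran B ⊆ ran R* for some, and hence every, square root (R, H) of A) if and only if for every y ∈ Y: (i) ⟨By, x⟩ = 0 for all x ∈ ker A, and (ii) sup over x ∈ X of |⟨By, x⟩|²/⟨Ax, x⟩ is finite (with 0/0 := 0). -/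
/-! A conjugate-linear functional `φ` on `X` lies in the range of `R*` exactly when
`‖φ x‖ ≤ C ‖R x‖` for some `C`: such a bound makes `R x ↦ conj (φ x)` a well-defined bounded
functional on `ran R`, which extends to `H` by Hahn–Banach and is then represented by a vector
(Riesz). Since `⟨A x, x⟩ = ‖R x‖²` and `ker A = ker R`, the bound for `φ = B y` is precisely
conditions (i) and (ii). -/

open scoped ComplexOrder ComplexConjugate
open Complex

noncomputable section

theorem LinearMap.exists_strongDual_comp_eq_of_norm_le {𝕜 X E : Type*} [RCLike 𝕜]
    [AddCommGroup X] [Module 𝕜 X] [NormedAddCommGroup E] [NormedSpace 𝕜 E]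
    (R : X →ₗ[𝕜] E) (g : X →ₗ[𝕜] 𝕜) (C : ℝ) (hg : ∀ x, ‖g x‖ ≤ C * ‖R x‖) :
    ∃ G : StrongDual 𝕜 E, ∀ x, G (R x) = g x := by
  obtain ⟨s, hs⟩ := R.rangeRestrict.exists_rightInverse_of_surjective R.range_rangeRestrict
  have hsection : ∀ x, g (s (R.rangeRestrict x)) = g x := by
    intro x
    have hR : R (s (R.rangeRestrict x) - x) = 0 := by
      rw [map_sub, sub_eq_zero]
      exact congr_arg Subtype.val (LinearMap.congr_fun hs (R.rangeRestrict x))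
    rw [← sub_eq_zero, ← map_sub, ← norm_le_zero_iff]
    simpa [hR] using hg (s (R.rangeRestrict x) - x)
  let F : StrongDual 𝕜 (LinearMap.range R) := (g ∘ₗ s).mkContinuous C <| by
    intro v
    obtain ⟨x, rfl⟩ := R.surjective_rangeRestrict v
    rw [LinearMap.comp_apply, hsection]
    exact hg x
  obtain ⟨G, hG, -⟩ := exists_extension_norm_eq _ F
  exact ⟨G, fun x => (hG (R.rangeRestrict x)).trans (hsection x)⟩

theorem exists_le_mul_iff_and_bddAbove_sq_div_sq {α : Type*} {u v : α → ℝ} (hu : 0 ≤ u)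
    (hv : 0 ≤ v) :
    ((∀ a, v a = 0 → u a = 0) ∧ BddAbove (Set.range fun a => u a ^ 2 / v a ^ 2)) ↔
      ∃ C, ∀ a, u a ≤ C * v a := by
  constructor
  · rintro ⟨hzero, C, hC⟩
    refine ⟨√C, fun a => ?_⟩
    rcases (hv a).eq_or_lt with hva | hva
    · simp [hzero a hva.symm, ← hva]
    · have hsq : u a ^ 2 ≤ C * v a ^ 2 := (div_le_iff₀ (pow_pos hva 2)).mp (hC ⟨a, rfl⟩)
      calc u a = √(u a ^ 2) := (Real.sqrt_sq (hu a)).symm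
        _ ≤ √(C * v a ^ 2) := Real.sqrt_le_sqrt hsq
        _ = √C * v a := by rw [Real.sqrt_mul' _ (by positivity), Real.sqrt_sq (hv a)]
  · rintro ⟨C, hC⟩
    refine ⟨fun a ha => le_antisymm (by simpa [ha] using hC a) (hu a), C ^ 2, ?_⟩
    rintro _ ⟨a, rfl⟩
    rcases (hv a).eq_or_lt with hva | hva
    · simpa [← hva] using sq_nonneg C
    · show u a ^ 2 / v a ^ 2 ≤ C ^ 2
      rw [← div_pow]
      exact pow_le_pow_left₀ (div_nonneg (hu a) (hv a)) ((div_le_iff₀ hva).mpr (hC a)) 2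

section adjMap

variable {X H : Type*} [AddCommGroup X] [Module ℂ X] [NormedAddCommGroup H]
  [InnerProductSpace ℂ H] (R : X →ₗ[ℂ] H)

@[simp]
theorem adjMap_apply_s7 (h : H) (x : X) : adjMap R h x = inner ℂ (R x) h := rfl

theorem re_adjMap_self (x : X) : (adjMap R (R x) x).re = ‖R x‖ ^ 2 :=
  inner_self_eq_norm_sq (𝕜 := ℂ) (R x)

theorem adjMap_self_eq_zero_iff (x : X) : adjMap R (R x) = 0 ↔ R x = 0 := by
  refine ⟨fun h => ?_, fun h => by simp [h]⟩
  simpa using LinearMap.congr_fun h x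

theorem mem_range_adjMap_iff [CompleteSpace H] (φ : X →ₗ⋆[ℂ] ℂ) :
    φ ∈ Set.range (adjMap R) ↔ ∃ C, ∀ x, ‖φ x‖ ≤ C * ‖R x‖ := by
  constructor
  · rintro ⟨h, rfl⟩
    exact ⟨‖h‖, fun x => by simpa [mul_comm] using norm_inner_le_norm (𝕜 := ℂ) (R x) h⟩
  · rintro ⟨C, hC⟩
    let conjφ : X →ₗ[ℂ] ℂ := ((starLinearEquiv ℂ : ℂ ≃ₗ⋆[ℂ] ℂ) : ℂ →ₗ⋆[ℂ] ℂ).comp φ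
    obtain ⟨G, hG⟩ := R.exists_strongDual_comp_eq_of_norm_le conjφ C (by simpa [conjφ] using hC)
    refine ⟨(InnerProductSpace.toDual ℂ H).symm G, LinearMap.ext fun x => ?_⟩
    rw [adjMap_apply_s7, ← inner_conj_symm, InnerProductSpace.toDual_symm_apply, hG]
    simp [conjφ]

end adjMap

theorem schur_stmt7_general {X Y H : Type} [AddCommGroup X] [Module ℂ X]
    [AddCommGroup Y] [Module ℂ Y]
    [NormedAddCommGroup H] [InnerProductSpace ℂ H] [CompleteSpace H]
    (A : X →ₗ[ℂ] (X →ₗ⋆[ℂ] ℂ)) (B : Y →ₗ[ℂ] (X →ₗ⋆[ℂ] ℂ)) (R : X →ₗ[ℂ] H)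
    (hR : ∀ x, A x = adjMap R (R x)) :
    (∀ y, B y ∈ Set.range (adjMap R)) ↔
      ∀ y, (∀ x, A x = 0 → B y x = 0) ∧
        BddAbove (Set.range fun x => ‖B y x‖ ^ 2 / (A x x).re) := by
  have hre (x : X) : (A x x).re = ‖R x‖ ^ 2 := by rw [hR]; exact re_adjMap_self R x
  have hker (x : X) : A x = 0 ↔ R x = 0 := by rw [hR, adjMap_self_eq_zero_iff]
  refine forall_congr' fun y => ?_
  rw [mem_range_adjMap_iff, ← exists_le_mul_iff_and_bddAbove_sq_div_sq (fun _ => norm_nonneg _)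
    (fun _ => norm_nonneg _)]
  simp only [hre, hker, norm_eq_zero]

theorem schur_stmt7 {X Y H : Type} [AddCommGroup X] [Module ℂ X]
    [AddCommGroup Y] [Module ℂ Y]
    [NormedAddCommGroup H] [InnerProductSpace ℂ H] [CompleteSpace H]
    (A : X →ₗ[ℂ] (X →ₗ⋆[ℂ] ℂ)) (B : Y →ₗ[ℂ] (X →ₗ⋆[ℂ] ℂ)) (R : X →ₗ[ℂ] H)
    (hA : ∀ x, 0 ≤ A x x) (hR : ∀ x, A x = adjMap R (R x)) :
    (∀ y, B y ∈ Set.range (adjMap R)) ↔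
      ∀ y, (∀ x, A x = 0 → B y x = 0) ∧
        BddAbove (Set.range fun x => ‖B y x‖ ^ 2 / (A x x).re) :=
  schur_stmt7_general A B R hR
end
end

section
/- A Hermitian block operator 𝐀 = [[A, B], [B~, D]] on X × Y is non-negative if and only if (i) A and D are non-negative, and (ii) for any square roots (R_A, H_A) of A and (R_D, H_D) of D there exists a contraction K : H_D → H_A with B = R_A* K R_D and ran K contained in the closure of ran R_A. -/
/-!
With `A = RA* RA` and `D = RD* RD`, the quadratic form of the block operator at `(x, y)` is the
real number `‖RA x‖² + 2 Re (B y x) + ‖RD y‖²`. Replacing `x` by the multiples `s • x` and looking at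
the discriminant shows that it is nonnegative everywhere iff `‖B y x‖ ≤ ‖RA x‖ ‖RD y‖`; conversely
this bound follows from Cauchy–Schwarz once `B y x = ⟪RA x, K (RD y)⟫` with `‖K‖ ≤ 1`.

Given the bound, `x ↦ conj (B y x)` is dominated by `‖RD y‖ ‖RA x‖`, so it extends to a functional on
`HA`; projecting its Riesz vector onto `closure (ran RA)` gives the unique `k y` there with
`⟪RA x, k y⟫ = B y x` and `‖k y‖ ≤ ‖RD y‖`. Uniqueness makes `k` linear, and the norm bound lets `k`
factor through `RD` by a contraction: extend from `ran RD` to its closure and precompose with the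
orthogonal projection.
-/

open scoped ComplexOrder ComplexConjugate
open Complex

noncomputable section

open scoped InnerProductSpace

section Extension

variable {𝕜 Z H : Type*} [RCLike 𝕜] [AddCommGroup Z] [Module 𝕜 Z]
  [NormedAddCommGroup H] [InnerProductSpace 𝕜 H]

theorem eq_of_mem_topologicalClosure_of_inner_eq {R : Z →ₗ[𝕜] H} {v w : H}
    (hv : v ∈ (LinearMap.range R).topologicalClosure)
    (hw : w ∈ (LinearMap.range R).topologicalClosure) (h : ∀ z, ⟪v, R z⟫_𝕜 = ⟪w, R z⟫_𝕜) :
    v = w := by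
  set S := (LinearMap.range R).topologicalClosure
  have hperp : v - w ∈ Sᗮ := by
    rw [Submodule.orthogonal_closure, Submodule.mem_orthogonal']
    rintro _ ⟨z, rfl⟩
    rw [inner_sub_left, h, sub_self]
  exact sub_eq_zero.1 (S.orthogonal_disjoint.le_bot ⟨S.sub_mem hv hw, hperp⟩)

variable [CompleteSpace H]

theorem LinearMap.exists_clm_comp_eq_of_norm_le {W : Type*} [NormedAddCommGroup W]
    [NormedSpace 𝕜 W] [CompleteSpace W] (R : Z →ₗ[𝕜] H) (g : Z →ₗ[𝕜] W) {C : ℝ} (hC : 0 ≤ C)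
    (hg : ∀ z, ‖g z‖ ≤ C * ‖R z‖) : ∃ G : H →L[𝕜] W, ‖G‖ ≤ C ∧ ∀ z, G (R z) = g z := by
  set S := (LinearMap.range R).topologicalClosure
  let R' : Z →ₗ[𝕜] S :=
    R.codRestrict S fun z => (LinearMap.range R).le_topologicalClosure ⟨z, rfl⟩
  have hdense : DenseRange R' := by
    refine Topology.IsInducing.subtypeVal.dense_iff.2 fun v => ?_
    rw [← Set.range_comp]
    exact v.2
  refine ⟨(g.extendOfNorm R').comp S.orthogonalProjectionOnto, ?_, fun z => ?_⟩
  · calc _ ≤ ‖g.extendOfNorm R'‖ * ‖S.orthogonalProjectionOnto‖ :=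
          ContinuousLinearMap.opNorm_comp_le _ _
      _ ≤ C * 1 := by
          gcongr
          exacts [LinearMap.opNorm_extendOfNorm_le hdense hC hg,
            S.orthogonalProjectionOnto_norm_le]
      _ = C := mul_one C
  · have hRz : S.orthogonalProjectionOnto (R z) = R' z :=
      S.orthogonalProjectionOnto_mem_subspace_eq_self (R' z)
    rw [ContinuousLinearMap.comp_apply, hRz, LinearMap.extendOfNorm_eq hdense ⟨C, hg⟩]

theorem exists_mem_topologicalClosure_inner_eq_of_norm_le (R : Z →ₗ[𝕜] H) (φ : Z →ₗ[𝕜] 𝕜)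
    {C : ℝ} (hC : 0 ≤ C) (hφ : ∀ z, ‖φ z‖ ≤ C * ‖R z‖) :
    ∃ v ∈ (LinearMap.range R).topologicalClosure, ‖v‖ ≤ C ∧ ∀ z, ⟪v, R z⟫_𝕜 = φ z := by
  set S := (LinearMap.range R).topologicalClosure
  obtain ⟨G, hG, hGR⟩ := R.exists_clm_comp_eq_of_norm_le φ hC hφ
  set v := (InnerProductSpace.toDual 𝕜 H).symm G
  refine ⟨S.starProjection v, S.starProjection_apply_mem v, ?_, fun z => ?_⟩
  · calc ‖S.starProjection v‖ ≤ ‖v‖ := S.norm_starProjection_apply_le v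
      _ = ‖G‖ := LinearIsometryEquiv.norm_map _ G
      _ ≤ C := hG
  · have hRz : S.starProjection (R z) = R z :=
      Submodule.starProjection_eq_self_iff.2 ((LinearMap.range R).le_topologicalClosure ⟨z, rfl⟩)
    rw [Submodule.inner_starProjection_left_eq_right, hRz, InnerProductSpace.toDual_symm_apply,
      hGR]

end Extension

@[simp]
theorem adjMap_apply_s14 {V H : Type*} [AddCommGroup V] [Module ℂ V] [NormedAddCommGroup H]
    [InnerProductSpace ℂ H] (R : V →ₗ[ℂ] H) (h : H) (v : V) : adjMap R h v = ⟪R v, h⟫_ℂ :=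
  rfl

theorem adjMap_apply_self {V H : Type*} [AddCommGroup V] [Module ℂ V] [NormedAddCommGroup H]
    [InnerProductSpace ℂ H] (R : V →ₗ[ℂ] H) (v : V) :
    adjMap R (R v) v = ((‖R v‖ ^ 2 : ℝ) : ℂ) := by
  rw [adjMap_apply_s14, inner_self_eq_norm_sq_to_K]
  norm_cast

theorem blockForm_eq {X Y HA HD : Type*} [AddCommGroup X] [Module ℂ X]
    [AddCommGroup Y] [Module ℂ Y] [NormedAddCommGroup HA] [InnerProductSpace ℂ HA]
    [NormedAddCommGroup HD] [InnerProductSpace ℂ HD]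
    {A : X →ₗ[ℂ] (X →ₗ⋆[ℂ] ℂ)} {D : Y →ₗ[ℂ] (Y →ₗ⋆[ℂ] ℂ)} {RA : X →ₗ[ℂ] HA} {RD : Y →ₗ[ℂ] HD}
    (B : Y →ₗ[ℂ] (X →ₗ⋆[ℂ] ℂ))
    (hRA : ∀ x, A x = adjMap RA (RA x)) (hRD : ∀ y, D y = adjMap RD (RD y)) (x : X) (y : Y) :
    (A x + B y) x + (Btilde B x + D y) y =
      ((‖RA x‖ ^ 2 + 2 * (B y x).re + ‖RD y‖ ^ 2 : ℝ) : ℂ) := by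
  have hconj : B y x + conj (B y x) = ((2 * (B y x).re : ℝ) : ℂ) := by
    rw [add_conj, ofReal_mul, ofReal_ofNat]
  simp only [LinearMap.add_apply, hRA, hRD, adjMap_apply_self, ofReal_add]
  change _ + B y x + (conj (B y x) + _) = _
  rw [← hconj]
  ring

theorem norm_le_mul_of_forall_nonneg {β : ℂ} {a b : ℝ} (ha : 0 ≤ a) (hb : 0 ≤ b)
    (h : ∀ s : ℂ, 0 ≤ (‖s‖ * a) ^ 2 + 2 * (conj s * β).re + b ^ 2) : ‖β‖ ≤ a * b := by
  have hquad : ∀ t : ℝ, 0 ≤ (‖β‖ ^ 2 * a ^ 2) * (t * t) + 2 * ‖β‖ ^ 2 * t + b ^ 2 := by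
    intro t
    have hre : (conj ((t : ℂ) * β) * β).re = t * ‖β‖ ^ 2 := by
      rw [map_mul, conj_ofReal, mul_assoc, conj_mul', ← ofReal_pow, ← ofReal_mul, ofReal_re]
    have := h (t * β)
    rw [hre, norm_mul, norm_real, Real.norm_eq_abs, mul_pow, mul_pow, sq_abs] at this
    linarith
  have hdisc := discrim_le_zero hquad
  rw [discrim] at hdisc
  by_contra! hlt
  have hsq : (a * b) ^ 2 < ‖β‖ ^ 2 := pow_lt_pow_left₀ hlt (mul_nonneg ha hb) two_ne_zero
  nlinarith [mul_lt_mul_of_pos_left hsq (pow_pos ((mul_nonneg ha hb).trans_lt hlt) 2)]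

theorem add_two_mul_re_add_nonneg_of_norm_le {β : ℂ} {a b : ℝ} (h : ‖β‖ ≤ a * b) :
    0 ≤ a ^ 2 + 2 * β.re + b ^ 2 := by
  nlinarith [neg_abs_le β.re, abs_re_le_norm β, sq_nonneg (a - b)]

theorem exists_contraction_adjMap_eq_of_norm_le {X Y HA HD : Type*}
    [AddCommGroup X] [Module ℂ X] [AddCommGroup Y] [Module ℂ Y]
    [NormedAddCommGroup HA] [InnerProductSpace ℂ HA] [CompleteSpace HA]
    [NormedAddCommGroup HD] [InnerProductSpace ℂ HD] [CompleteSpace HD]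
    (RA : X →ₗ[ℂ] HA) (RD : Y →ₗ[ℂ] HD) (B : Y →ₗ[ℂ] (X →ₗ⋆[ℂ] ℂ))
    (hB : ∀ x y, ‖B y x‖ ≤ ‖RA x‖ * ‖RD y‖) :
    ∃ K : HD →L[ℂ] HA, ‖K‖ ≤ 1 ∧ (∀ y, B y = adjMap RA (K (RD y))) ∧
      Set.range K ⊆ closure (Set.range RA) := by
  set S := (LinearMap.range RA).topologicalClosure
  have hvec : ∀ y, ∃ v ∈ S, ‖v‖ ≤ ‖RD y‖ ∧ ∀ x, ⟪v, RA x⟫_ℂ = conj (B y x) := fun y =>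
    exists_mem_topologicalClosure_inner_eq_of_norm_le RA ((Btilde B).flip y) (norm_nonneg _)
      fun x => by simpa [Btilde, mul_comm] using hB x y
  choose k hkS hknorm hk using hvec
  let kₗ : Y →ₗ[ℂ] HA :=
    { toFun := k
      map_add' := fun y₁ y₂ => eq_of_mem_topologicalClosure_of_inner_eq (hkS _)
        (S.add_mem (hkS y₁) (hkS y₂)) fun x => by simp [inner_add_left, hk]
      map_smul' := fun c y => eq_of_mem_topologicalClosure_of_inner_eq (hkS _)
        (S.smul_mem c (hkS y)) fun x => by simp [inner_smul_left, hk] }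
  obtain ⟨K₀, hK₀, hK₀R⟩ := RD.exists_clm_comp_eq_of_norm_le kₗ zero_le_one
    fun y => (hknorm y).trans_eq (one_mul _).symm
  refine ⟨S.starProjection ∘L K₀, ?_, fun y => ?_, ?_⟩
  · calc _ ≤ ‖S.starProjection‖ * ‖K₀‖ := ContinuousLinearMap.opNorm_comp_le _ _
      _ ≤ 1 * 1 := by gcongr; exact S.starProjection_norm_le
      _ = 1 := one_mul 1
  · ext x
    have hky : S.starProjection (k y) = k y := Submodule.starProjection_eq_self_iff.2 (hkS y)
    rw [adjMap_apply_s14, ContinuousLinearMap.comp_apply, hK₀R]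
    change B y x = ⟪RA x, S.starProjection (k y)⟫_ℂ
    rw [hky, ← inner_conj_symm, hk, conj_conj]
  · rintro _ ⟨h, rfl⟩
    rw [← LinearMap.coe_range, ← Submodule.topologicalClosure_coe]
    exact S.starProjection_apply_mem _

theorem schur_stmt14 {X Y HA HD : Type} [AddCommGroup X] [Module ℂ X]
    [AddCommGroup Y] [Module ℂ Y]
    [NormedAddCommGroup HA] [InnerProductSpace ℂ HA] [CompleteSpace HA]
    [NormedAddCommGroup HD] [InnerProductSpace ℂ HD] [CompleteSpace HD]
    (A : X →ₗ[ℂ] (X →ₗ⋆[ℂ] ℂ)) (B : Y →ₗ[ℂ] (X →ₗ⋆[ℂ] ℂ))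
    (D : Y →ₗ[ℂ] (Y →ₗ⋆[ℂ] ℂ))
    (RA : X →ₗ[ℂ] HA) (RD : Y →ₗ[ℂ] HD)
    (hRA : ∀ x, A x = adjMap RA (RA x)) (hRD : ∀ y, D y = adjMap RD (RD y)) :
    (∀ (x : X) (y : Y), 0 ≤ (A x + B y) x + ((Btilde B) x + D y) y) ↔
      ((∀ x, 0 ≤ A x x) ∧ (∀ y, 0 ≤ D y y) ∧
        ∃ K : HD →L[ℂ] HA, ‖K‖ ≤ 1 ∧ (∀ y, B y = adjMap RA (K (RD y))) ∧
          Set.range K ⊆ closure (Set.range RA)) := by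
  simp only [blockForm_eq B hRA hRD]
  simp only [hRA, hRD, adjMap_apply_self, zero_le_real]
  constructor
  · intro h
    refine ⟨fun x => sq_nonneg _, fun y => sq_nonneg _,
      exists_contraction_adjMap_eq_of_norm_le RA RD B fun x y => ?_⟩
    refine norm_le_mul_of_forall_nonneg (norm_nonneg _) (norm_nonneg _) fun s => ?_
    simpa [norm_smul] using h (s • x) y
  · rintro ⟨-, -, K, hK, hB, -⟩ x y
    refine add_two_mul_re_add_nonneg_of_norm_le ?_
    calc ‖B y x‖ = ‖⟪RA x, K (RD y)⟫_ℂ‖ := by rw [hB y, adjMap_apply_s14]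
      _ ≤ ‖RA x‖ * ‖K (RD y)‖ := norm_inner_le_norm _ _
      _ ≤ ‖RA x‖ * ‖RD y‖ := by
          gcongr
          simpa using K.le_of_opNorm_le hK (RD y)
end
end
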